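/- arXiv:0801.3639 — 9 statements merged into one kernel-verified Lean document; each statement's English description precedes it below -/
import Mathlib

section
/- Let n ≥ 1 and k ≥ 1 be natural numbers, and for each i with 0 ≤ i ≤ k let m_i be a natural number with gcd(m_i, n+i) = 1 and 0 < m_i < n+i. Then the rational number ∑_{i=0}^{k} m_i/(n+i) is not an integer. -/
/-!
Let `2 ^ v` be the largest power of two dividing one of `n, …, n + k`. It divides exactly one of
them, say `n + i₀`: between two distinct multiples of `2 ^ v` lies a multiple of `2 ^ (v + 1)`.
As `k ≥ 1`, some denominator is even, so `v ≥ 1`, and then `m i₀` is odd. Hence the term `i₀` has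
`2`-adic norm `2 ^ v > 1` while every other term has strictly smaller norm, so by the ultrametric
inequality the whole sum has norm `2 ^ v` as well and cannot be an integer.
-/

lemma exists_two_pow_succ_dvd_of_lt {e a b : ℕ} (ha : 2 ^ e ∣ a) (hb : 2 ^ e ∣ b) (hab : a < b) :
    ∃ c ∈ Finset.Icc a b, 2 ^ (e + 1) ∣ c := by
  have hgap : a + 2 ^ e ≤ b := by
    have := Nat.le_of_dvd (by omega) (Nat.dvd_sub hb ha)
    omega
  obtain ⟨s, rfl⟩ := ha
  rcases Nat.even_or_odd s with ⟨t, rfl⟩ | ⟨t, rfl⟩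
  · exact ⟨2 ^ e * (t + t), by simp [hab.le], t, by ring⟩
  · refine ⟨2 ^ e * (2 * t + 2), ?_, t + 1, by ring⟩
    rw [Finset.mem_Icc]
    constructor <;> nlinarith [Nat.one_le_two_pow (n := e)]

lemma exists_unique_max_padicValNat_two {a b : ℕ} (ha : 0 < a) (hab : a ≤ b) :
    ∃ c ∈ Finset.Icc a b, ∀ d ∈ Finset.Icc a b, d ≠ c → padicValNat 2 d < padicValNat 2 c := by
  obtain ⟨c, hc, hmax⟩ :=
    (Finset.Icc a b).exists_max_image (padicValNat 2) (Finset.nonempty_Icc.2 hab)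
  have no_tie : ∀ x ∈ Finset.Icc a b, ∀ y ∈ Finset.Icc a b, x < y →
      padicValNat 2 x = padicValNat 2 c → padicValNat 2 y = padicValNat 2 c → False := by
    intro x hx y hy hxy hxc hyc
    obtain ⟨z, hz, hdvd⟩ := exists_two_pow_succ_dvd_of_lt
      (hxc ▸ pow_padicValNat_dvd) (hyc ▸ pow_padicValNat_dvd) hxy
    simp only [Finset.mem_Icc] at hx hy hz
    have hzc := hmax z (Finset.mem_Icc.2 ⟨by omega, by omega⟩)
    have := (padicValNat_dvd_iff_le (by omega)).1 hdvd
    omega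
  refine ⟨c, hc, fun d hd hdc => (hmax d hd).lt_of_ne fun heq => ?_⟩
  rcases lt_or_gt_of_ne hdc with h | h
  · exact no_tie d hd c hc h heq rfl
  · exact no_tie c hc d hd h rfl heq

section padicNorm

variable {p : ℕ} [Fact p.Prime]

lemma padicNorm_div_natCast (m : ℕ) {d : ℕ} (hd : d ≠ 0) :
    padicNorm p ((m : ℚ) / d) = padicNorm p m * (p : ℚ) ^ padicValNat p d := by
  rw [padicNorm.div, padicNorm.eq_zpow_of_nonzero (q := (d : ℚ)) (by exact_mod_cast hd),
    padicValRat.of_nat, zpow_neg, zpow_natCast, div_inv_eq_mul]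

lemma padicNorm_div_natCast_le (m : ℕ) {d : ℕ} (hd : d ≠ 0) :
    padicNorm p ((m : ℚ) / d) ≤ (p : ℚ) ^ padicValNat p d := by
  rw [padicNorm_div_natCast m hd]
  exact mul_le_of_le_one_left (by positivity) (padicNorm.of_nat m)

lemma padicNorm_div_natCast_of_not_dvd {m d : ℕ} (hm : ¬ p ∣ m) (hd : d ≠ 0) :
    padicNorm p ((m : ℚ) / d) = (p : ℚ) ^ padicValNat p d := by
  rw [padicNorm_div_natCast m hd, (padicNorm.nat_eq_one_iff m).2 hm, one_mul]

end padicNorm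

theorem sum_irreducible_fractions_consecutive_denominators_not_integer_general
    (n k : ℕ) (hn : 1 ≤ n) (hk : 1 ≤ k) (m : ℕ → ℕ)
    (hcop : ∀ i ≤ k, Nat.gcd (m i) (n + i) = 1) :
    ¬ ∃ z : ℤ, ∑ i ∈ Finset.range (k + 1), (m i : ℚ) / (n + i) = (z : ℚ) := by
  rintro ⟨z, hz⟩
  obtain ⟨c, hc, hmax⟩ := exists_unique_max_padicValNat_two hn (Nat.le_add_right n k)
  obtain ⟨i₀, rfl⟩ : ∃ i₀, c = n + i₀ := ⟨c - n, by simp only [Finset.mem_Icc] at hc; omega⟩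
  have hi₀ : i₀ ≤ k := by simpa using hc
  have hlt : ∀ j ≤ k, j ≠ i₀ → padicValNat 2 (n + j) < padicValNat 2 (n + i₀) :=
    fun j hj hji => hmax _ (by simpa using hj) (by omega)
  set v := padicValNat 2 (n + i₀)
  have hv : 1 ≤ v := by
    obtain ⟨j, hj, heven⟩ : ∃ j ≤ 1, 2 ∣ n + j := ⟨n % 2, by omega, by omega⟩
    have := one_le_padicValNat_of_dvd (by omega) heven
    rcases eq_or_ne j i₀ with rfl | hji
    · exact this
    · exact this.trans (hlt j (by omega) hji).le
  have hnorm : padicNorm 2 ((m i₀ : ℚ) / (n + i₀ : ℕ)) = 2 ^ v := by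
    have heven : 2 ∣ n + i₀ := dvd_of_one_le_padicValNat hv
    have hodd : ¬ 2 ∣ m i₀ :=
      Nat.prime_two.coprime_iff_not_dvd.1 (Nat.Coprime.coprime_dvd_right heven (hcop i₀ hi₀)).symm
    exact_mod_cast padicNorm_div_natCast_of_not_dvd hodd (by omega)
  have hsum : padicNorm 2 (∑ i ∈ Finset.range (k + 1), (m i : ℚ) / (n + i : ℕ)) = 2 ^ v := by
    rw [IsNonarchimedean.apply_sum_eq_of_lt (fun _ _ => padicNorm.nonarchimedean)
      (fun q => (padicNorm.neg q).symm) (k := i₀) (by simpa using hi₀) ?_, hnorm]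
    intro j hj hji
    rw [hnorm]
    calc padicNorm 2 ((m j : ℚ) / (n + j : ℕ)) ≤ 2 ^ padicValNat 2 (n + j) :=
          mod_cast padicNorm_div_natCast_le (m j) (by omega)
      _ < 2 ^ v := pow_lt_pow_right₀ one_lt_two (hlt j (by simpa using hj) hji)
  push_cast at hsum
  rw [hz] at hsum
  have := padicNorm.of_int (p := 2) z
  have : (1 : ℚ) < 2 ^ v := one_lt_pow₀ one_lt_two (by omega)
  linarith

theorem sum_irreducible_fractions_consecutive_denominators_not_integer
    (n k : ℕ) (hn : 1 ≤ n) (hk : 1 ≤ k) (m : ℕ → ℕ)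
    (hcop : ∀ i ≤ k, Nat.gcd (m i) (n + i) = 1)
    (hpos : ∀ i ≤ k, 0 < m i)
    (hlt : ∀ i ≤ k, m i < n + i) :
    ¬ ∃ z : ℤ, ∑ i ∈ Finset.range (k + 1), (m i : ℚ) / (n + i) = (z : ℚ) :=
  sum_irreducible_fractions_consecutive_denominators_not_integer_general n k hn hk m hcop
end

section
/- Let n ≥ 1 and k ≥ 1 be natural numbers, let m_0, …, m_k and p be natural numbers such that for each i with 0 ≤ i ≤ k there exist natural numbers a and b with m_i · a = (n+i) · b + 1, and such that m_i ≤ n + i for all i. Then ∑_{i=0}^{k} ( m_i · ∏_{0 ≤ j ≤ k, j ≠ i} (n+j) ) ≠ p · ∏_{j=0}^{k} (n+j). -/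
lemma between_dvd (t a b : ℕ) (hab : a < b) (hda : 2 ^ t ∣ a) (hdb : 2 ^ t ∣ b)
    (hna : ¬ 2 ^ (t + 1) ∣ a) (hnb : ¬ 2 ^ (t + 1) ∣ b) :
    ∃ c, a < c ∧ c < b ∧ 2 ^ (t + 1) ∣ c := by
  have hpt : 0 < 2 ^ t := pow_pos (by norm_num) t
  obtain ⟨s, hs⟩ := hda
  have hs_odd : ¬ 2 ∣ s := by
    intro ⟨u, hu⟩
    exact hna ⟨u, by rw [hs, hu, pow_succ]; ring⟩
  obtain ⟨u, hu⟩ : 2 ∣ s + 1 := by omega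
  have hdc : 2 ^ (t + 1) ∣ a + 2 ^ t := by
    refine ⟨u, ?_⟩
    calc a + 2 ^ t = 2 ^ t * (s + 1) := by rw [hs]; ring
    _ = 2 ^ t * (2 * u) := by rw [hu]
    _ = 2 ^ (t + 1) * u := by rw [pow_succ]; ring
  refine ⟨a + 2 ^ t, by omega, ?_, hdc⟩
  have hdiff : 2 ^ t ∣ b - a := Nat.dvd_sub hdb ⟨s, hs⟩
  have h1 : 2 ^ t ≤ b - a := Nat.le_of_dvd (by omega) hdiff
  have hle : a + 2 ^ t ≤ b := by omega
  rcases lt_or_eq_of_le hle with h | h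
  · exact h
  · exact absurd (h ▸ hdc) hnb

/-- Between two numbers with equal 2-adic valuation there is one with larger valuation. -/
lemma exists_between_larger_val (a b : ℕ) (ha : 0 < a) (hab : a < b)
    (hfa : a.factorization 2 = b.factorization 2) :
    ∃ c, a < c ∧ c < b ∧ a.factorization 2 < c.factorization 2 := by
  have hb : 0 < b := lt_trans ha hab
  have h2 : Nat.Prime 2 := Nat.prime_two
  obtain ⟨c, hc1, hc2, hc3⟩ := between_dvd (a.factorization 2) a b hab
    (Nat.ordProj_dvd a 2) (hfa ▸ Nat.ordProj_dvd b 2)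
    (Nat.pow_succ_factorization_not_dvd ha.ne' h2)
    (by rw [hfa]; exact Nat.pow_succ_factorization_not_dvd hb.ne' h2)
  refine ⟨c, hc1, hc2, ?_⟩
  have hc0 : c ≠ 0 := by omega
  have := (Nat.Prime.pow_dvd_iff_le_factorization h2 hc0).mp hc3
  omega

theorem phi_k_over_nat
    (n k : ℕ) (hn : 1 ≤ n) (hk : 1 ≤ k) (m : ℕ → ℕ) (p : ℕ)
    (hinv : ∀ i ≤ k, ∃ a b : ℕ, m i * a = (n + i) * b + 1)
    (hle : ∀ i ≤ k, m i ≤ n + i) :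
    ∑ i ∈ Finset.range (k + 1),
        m i * ∏ j ∈ (Finset.range (k + 1)).erase i, (n + j)
      ≠ p * ∏ j ∈ Finset.range (k + 1), (n + j) := by
  intro heq
  have h2 : Nat.Prime 2 := Nat.prime_two
  set F : Finset ℕ := Finset.range (k + 1) with hF
  set v : ℕ → ℕ := fun i => (n + i).factorization 2 with hv
  -- if 2 divides n + i then m i is odd
  have hm_odd : ∀ i ≤ k, 2 ∣ (n + i) → ¬ 2 ∣ m i := by
    intro i hi hdvd hm
    obtain ⟨a, b, hab⟩ := hinv i hi
    have h1 : 2 ∣ m i * a := hm.mul_right a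
    rw [hab] at h1
    have h2' : 2 ∣ (n + i) * b := hdvd.mul_right b
    omega
  have hm_pos : ∀ i ≤ k, 0 < m i := by
    intro i hi
    obtain ⟨a, b, hab⟩ := hinv i hi
    by_contra h
    simp [show m i = 0 by omega] at hab
  have hni_pos : ∀ j, 0 < n + j := fun j => by omega
  -- pick the index with maximal 2-adic valuation
  obtain ⟨i0, hi0F, hi0max⟩ := Finset.exists_max_image F v ⟨0, by simp [hF]⟩
  have hi0k : i0 ≤ k := by simpa [hF, Nat.lt_succ_iff] using hi0F
  -- v i0 ≥ 1 : some n + i is even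
  have hv1 : 1 ≤ v i0 := by
    have : ∃ i ≤ k, 2 ∣ (n + i) := by
      rcases Nat.even_or_odd n with ⟨c, hc⟩ | ⟨c, hc⟩
      · exact ⟨0, by omega, by omega⟩
      · exact ⟨1, hk, by omega⟩
    obtain ⟨i, hik, hdvd⟩ := this
    have hvi : 1 ≤ v i := by
      have h1 : (2 : ℕ) ^ 1 ∣ n + i := by rw [pow_one]; exact hdvd
      have := (Nat.Prime.pow_dvd_iff_le_factorization h2 (hni_pos i).ne').mp h1
      simpa [hv] using this
    exact le_trans hvi (hi0max i (by simp [hF]; omega))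
  -- strict maximality: for i ≠ i0 in F, v i < v i0
  have hstrict : ∀ i ∈ F, i ≠ i0 → v i < v i0 := by
    intro i hiF hne
    rcases lt_or_eq_of_le (hi0max i hiF) with h | h
    · exact h
    · exfalso
      have hik : i ≤ k := by simpa [hF, Nat.lt_succ_iff] using hiF
      have hne' : n + i ≠ n + i0 := by omega
      -- two distinct elements with equal valuation: get one with bigger valuation in between
      have key : ∀ a b : ℕ, a ≤ k → b ≤ k → n + a < n + b →
          v a = v b → v i0 ≤ v a → False := by
        intro a b hak hbk hab hveq hva
        obtain ⟨c, hc1, hc2, hc3⟩ := exists_between_larger_val (n + a) (n + b)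
          (hni_pos a) hab (by simpa [hv] using hveq)
        set j := c - n with hj
        have hcj : c = n + j := by omega
        have hjk : j ≤ k := by omega
        have h4 : v j ≤ v i0 := hi0max j (by simp [hF]; omega)
        have h5 : v a < v j := by simp only [hv]; rw [← hcj]; exact hc3
        omega
      rcases lt_trichotomy (n + i) (n + i0) with hlt | hq | hgt
      · exact key i i0 hik hi0k hlt h h.ge
      · exact hne' hq
      · exact key i0 i hi0k hik hgt h.symm le_rfl
  -- valuations of products
  set W : ℕ → ℕ := fun i => ∑ j ∈ F.erase i, v j with hW
  have hprod_fact : ∀ i, (∏ j ∈ F.erase i, (n + j)).factorization 2 = W i := by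
    intro i
    rw [Nat.factorization_prod (fun j _ => (hni_pos j).ne')]
    simp [hW, hv]
  have hprod_pos : ∀ i, 0 < ∏ j ∈ F.erase i, (n + j) :=
    fun i => Finset.prod_pos (fun j _ => hni_pos j)
  -- W i0 + v i0 = W i + v i for all i ∈ F (both equal total sum)
  have hWsum : ∀ i ∈ F, W i + v i = ∑ j ∈ F, v j := by
    intro i hiF
    simpa [hW] using Finset.sum_erase_add F v hiF
  -- 2 ^ (W i0 + 1) divides every term except i0
  have hdvd_term : ∀ i ∈ F, i ≠ i0 →
      2 ^ (W i0 + 1) ∣ m i * ∏ j ∈ F.erase i, (n + j) := by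
    intro i hiF hne
    have h1 : W i0 + 1 ≤ W i := by
      have := hWsum i hiF
      have := hWsum i0 hi0F
      have := hstrict i hiF hne
      omega
    have h2' : 2 ^ (W i) ∣ ∏ j ∈ F.erase i, (n + j) := by
      rw [← hprod_fact i]; exact Nat.ordProj_dvd _ 2
    exact dvd_mul_of_dvd_right (dvd_trans (pow_dvd_pow 2 h1) h2') _
  -- 2 ^ (W i0 + 1) divides the RHS
  have hdvd_rhs : 2 ^ (W i0 + 1) ∣ p * ∏ j ∈ F, (n + j) := by
    have hV : W i0 + 1 ≤ (∏ j ∈ F, (n + j)).factorization 2 := by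
      rw [Nat.factorization_prod (fun j _ => (hni_pos j).ne'), Finset.sum_apply']
      have hws := hWsum i0 hi0F
      simp only [hv] at hws
      have hvv : 1 ≤ (n + i0).factorization 2 := hv1
      omega
    exact dvd_mul_of_dvd_right (dvd_trans (pow_dvd_pow 2 hV) (Nat.ordProj_dvd _ 2)) _
  -- 2 ^ (W i0 + 1) does not divide term i0
  have hnot_dvd : ¬ 2 ^ (W i0 + 1) ∣ m i0 * ∏ j ∈ F.erase i0, (n + j) := by
    have hterm_pos : 0 < m i0 * ∏ j ∈ F.erase i0, (n + j) :=
      Nat.mul_pos (hm_pos i0 hi0k) (hprod_pos i0)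
    have hmodd : ¬ 2 ∣ m i0 := by
      apply hm_odd i0 hi0k
      have h1 : (2 : ℕ) ^ 1 ∣ n + i0 :=
        (Nat.Prime.pow_dvd_iff_le_factorization h2 (hni_pos i0).ne').mpr (by simpa [hv] using hv1)
      simpa using h1
    have hfact : (m i0 * ∏ j ∈ F.erase i0, (n + j)).factorization 2 = W i0 := by
      rw [Nat.factorization_mul (hm_pos i0 hi0k).ne' (hprod_pos i0).ne']
      simp [Nat.factorization_eq_zero_of_not_dvd hmodd, hprod_fact i0]
    have := Nat.pow_succ_factorization_not_dvd hterm_pos.ne' h2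
    rwa [hfact] at this
  -- combine
  have hsum_split : ∑ i ∈ F, m i * ∏ j ∈ F.erase i, (n + j)
      = (∑ i ∈ F.erase i0, m i * ∏ j ∈ F.erase i, (n + j))
        + m i0 * ∏ j ∈ F.erase i0, (n + j) :=
    (Finset.sum_erase_add F _ hi0F).symm
  have hdvd_rest : 2 ^ (W i0 + 1) ∣ ∑ i ∈ F.erase i0, m i * ∏ j ∈ F.erase i, (n + j) :=
    Finset.dvd_sum (fun i hi => hdvd_term i (Finset.mem_of_mem_erase hi)
      (Finset.ne_of_mem_erase hi))
  apply hnot_dvd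
  have : 2 ^ (W i0 + 1) ∣ ∑ i ∈ F, m i * ∏ j ∈ F.erase i, (n + j) := heq ▸ hdvd_rhs
  rw [hsum_split] at this
  exact (Nat.dvd_add_right hdvd_rest).mp this
end

section
/- Let n ≥ 1 and k ≥ 1 be natural numbers, and let a = max{ v_2(n+i) : 0 ≤ i ≤ k }, where v_2 denotes the 2-adic valuation (the exponent of the highest power of 2 dividing a positive integer). Then there is exactly one index i with 0 ≤ i ≤ k such that 2^a divides n + i. -/
lemma kurschak_aux (n k a : ℕ) (hn : 1 ≤ n)
    (ha : a = (Finset.range (k + 1)).sup (fun i => padicValNat 2 (n + i))) :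
    ∀ i j, i ≤ k → j ≤ k → 2 ^ a ∣ n + i → 2 ^ a ∣ n + j → i < j → False := by
  intro i j hik hjk hi hj hij
  obtain ⟨u, hu⟩ := hi
  obtain ⟨w, hw⟩ := hj
  have huw : u < w := by
    have : 2 ^ a * u < 2 ^ a * w := by omega
    exact lt_of_mul_lt_mul_left this (by positivity)
  -- pick an even t with u ≤ t ≤ w
  set t := if Even u then u else u + 1 with ht
  have het : Even t := by
    by_cases h : Even u
    · simpa [ht, h]
    · simp only [ht, if_neg h]
      exact Nat.even_add_one.mpr h
  have htu : u ≤ t := by by_cases h : Even u <;> simp [ht, h] <;> omega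
  have htw : t ≤ w := by by_cases h : Even u <;> simp [ht, h] <;> omega
  have hm1 : n + i ≤ 2 ^ a * t := by
    calc n + i = 2 ^ a * u := hu
    _ ≤ 2 ^ a * t := Nat.mul_le_mul_left _ htu
  have hm2 : 2 ^ a * t ≤ n + j := by
    calc 2 ^ a * t ≤ 2 ^ a * w := Nat.mul_le_mul_left _ htw
    _ = n + j := hw.symm
  set i' := 2 ^ a * t - n with hi'
  have hmeq : n + i' = 2 ^ a * t := by omega
  have hi'k : i' ≤ k := by omega
  have hdvd : 2 ^ (a + 1) ∣ n + i' := by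
    obtain ⟨s, hs⟩ := het
    rw [hmeq]
    exact ⟨s, by rw [hs]; ring⟩
  have hpos : n + i' ≠ 0 := by omega
  have hval : a + 1 ≤ padicValNat 2 (n + i') := by
    have := (padicValNat_dvd_iff_le (p := 2) (n := a + 1) hpos).mp hdvd
    omega
  have hle : padicValNat 2 (n + i') ≤ a := by
    rw [ha]
    exact Finset.le_sup (f := fun i => padicValNat 2 (n + i))
      (Finset.mem_range.mpr (by omega))
  omega

theorem kurschak_unique_max_two_adic
    (n k : ℕ) (hn : 1 ≤ n) (hk : 1 ≤ k)
    (a : ℕ) (ha : a = (Finset.range (k + 1)).sup (fun i => padicValNat 2 (n + i))) :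
    ∃! i, i ≤ k ∧ 2 ^ a ∣ n + i := by
  obtain ⟨i, hi, hieq⟩ := Finset.exists_mem_eq_sup (Finset.range (k + 1))
    ⟨0, Finset.mem_range.mpr (by omega)⟩ (fun i => padicValNat 2 (n + i))
  rw [← ha] at hieq
  refine ⟨i, ⟨by simpa using Nat.lt_succ_iff.mp (Finset.mem_range.mp hi), ?_⟩, ?_⟩
  · rw [hieq]
    exact pow_padicValNat_dvd
  · rintro j ⟨hjk, hjd⟩
    have hik : i ≤ k := Nat.lt_succ_iff.mp (Finset.mem_range.mp hi)
    have hid : 2 ^ a ∣ n + i := by rw [hieq]; exact pow_padicValNat_dvd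
    rcases lt_trichotomy j i with h | h | h
    · exact absurd (kurschak_aux n k a hn ha j i hjk hik hjd hid h) (by simp)
    · exact h
    · exact absurd (kurschak_aux n k a hn ha i j hik hjk hid hjd h) (by simp)
end

section
/- Let n ≥ 1 and k ≥ 1 be natural numbers, let l = lcm(n, n+1, …, n+k), let a = max{ v_2(n+i) : 0 ≤ i ≤ k }, and let i₀ be an index with 0 ≤ i₀ ≤ k such that 2^a divides n + i₀. Then l/(n+i₀) is odd, and for every i with 0 ≤ i ≤ k and i ≠ i₀, the quotient l/(n+i) is even. -/
lemma kurschak_lcm_padic (p : ℕ) (hp : p.Prime) (s : Finset ℕ) (f : ℕ → ℕ)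
    (hf : ∀ i ∈ s, f i ≠ 0) :
    s.lcm f ≠ 0 ∧ padicValNat p (s.lcm f) = s.sup (fun i => padicValNat p (f i)) := by
  classical
  induction s using Finset.induction_on with
  | empty => simp [padicValNat.one]
  | @insert b t hbt ih =>
    have hfb : f b ≠ 0 := hf b (Finset.mem_insert_self _ _)
    have hft : ∀ i ∈ t, f i ≠ 0 := fun i hi => hf i (Finset.mem_insert_of_mem hi)
    obtain ⟨h1, h2⟩ := ih hft
    have hlcm : (insert b t).lcm f = Nat.lcm (f b) (t.lcm f) := by
      rw [Finset.lcm_insert, lcm_eq_nat_lcm]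
    have hne : Nat.lcm (f b) (t.lcm f) ≠ 0 := Nat.lcm_ne_zero hfb h1
    refine ⟨by rw [hlcm]; exact hne, ?_⟩
    rw [hlcm, Finset.sup_insert, ← h2]
    have hfac := Nat.factorization_lcm hfb h1
    rw [← Nat.factorization_def _ hp, ← Nat.factorization_def _ hp,
      ← Nat.factorization_def _ hp, hfac, Finsupp.sup_apply]

theorem kurschak_lcm_quotient_parity
    (n k : ℕ) (hn : 1 ≤ n) (hk : 1 ≤ k)
    (l : ℕ) (hl : l = (Finset.range (k + 1)).lcm (fun i => n + i))
    (a : ℕ) (ha : a = (Finset.range (k + 1)).sup (fun i => padicValNat 2 (n + i)))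
    (i₀ : ℕ) (hi₀ : i₀ ≤ k) (hdvd : 2 ^ a ∣ n + i₀) :
    Odd (l / (n + i₀)) ∧ ∀ i ≤ k, i ≠ i₀ → Even (l / (n + i)) := by
  have hp : Nat.Prime 2 := Nat.prime_two
  have hf0 : ∀ i ∈ Finset.range (k + 1), n + i ≠ 0 := fun i _ => by omega
  obtain ⟨hl0, hval⟩ := kurschak_lcm_padic 2 hp _ _ hf0
  rw [← hl] at hl0 hval
  rw [← ha] at hval
  -- each valuation is at most a
  have hle : ∀ i ≤ k, padicValNat 2 (n + i) ≤ a := by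
    intro i hi
    rw [ha]
    exact Finset.le_sup (f := fun i => padicValNat 2 (n + i)) (Finset.mem_range.mpr (by omega))
  have hdl : ∀ i ≤ k, n + i ∣ l := by
    intro i hi
    rw [hl]
    exact Finset.dvd_lcm (Finset.mem_range.mpr (by omega))
  -- no n + j is divisible by 2^(a+1)
  have hbound : ∀ j ≤ k, ¬ 2 ^ (a + 1) ∣ n + j := by
    intro j hj hd
    have h1 := (Nat.Prime.pow_dvd_iff_le_factorization hp (by omega : n + j ≠ 0)).1 hd
    rw [Nat.factorization_def _ hp] at h1
    have := hle j hj
    omega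
  -- l is not divisible by 2^(a+1)
  have hL : ¬ 2 ^ (a + 1) ∣ l := by
    intro hd
    have h1 := (Nat.Prime.pow_dvd_iff_le_factorization hp hl0).1 hd
    rw [Nat.factorization_def _ hp, hval] at h1
    omega
  -- uniqueness of the index achieving the max valuation
  have huniq : ∀ i ≤ k, i ≠ i₀ → ¬ 2 ^ a ∣ n + i := by
    intro i hik hne hcontra
    -- obtain u < v ≤ k with both divisible by 2^a
    obtain ⟨u, v, huv, hvk, h2u, h2v⟩ :
        ∃ u v : ℕ, u < v ∧ v ≤ k ∧ 2 ^ a ∣ n + u ∧ 2 ^ a ∣ n + v := by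
      rcases Nat.lt_or_ge i i₀ with h | h
      · exact ⟨i, i₀, h, hi₀, hcontra, hdvd⟩
      · exact ⟨i₀, i, by omega, hik, hdvd, hcontra⟩
    have hdiff : 2 ^ a ∣ v - u := by
      have := Nat.dvd_sub h2v h2u
      have heq : n + v - (n + u) = v - u := by omega
      rwa [heq] at this
    have hpow_le : 2 ^ a ≤ v - u := Nat.le_of_dvd (by omega) hdiff
    obtain ⟨t, ht⟩ := h2u
    rcases Nat.even_or_odd t with he | ho
    · obtain ⟨c, hc⟩ := he
      exact hbound u (by omega) ⟨c, by rw [ht, hc]; ring⟩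
    · obtain ⟨c, hc⟩ := ho
      refine hbound (u + 2 ^ a) (by omega) ⟨c + 1, ?_⟩
      have : n + (u + 2 ^ a) = 2 ^ a * (t + 1) := by
        rw [Nat.mul_add, mul_one, ← ht]; omega
      rw [this, hc]; ring
  constructor
  · -- odd part
    have hnotdvd : ¬ 2 ∣ l / (n + i₀) := by
      intro h
      rw [Nat.dvd_div_iff_mul_dvd (hdl i₀ hi₀)] at h
      apply hL
      calc 2 ^ (a + 1) = 2 ^ a * 2 := by ring
        _ ∣ (n + i₀) * 2 := Nat.mul_dvd_mul_right hdvd 2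
        _ ∣ l := h
    rcases Nat.even_or_odd (l / (n + i₀)) with he | ho
    · exact absurd he.two_dvd hnotdvd
    · exact ho
  · -- even part
    intro i hik hne
    set b := padicValNat 2 (n + i) with hb
    have hni0 : n + i ≠ 0 := by omega
    have hblt : b < a := by
      by_contra hge
      exact huniq i hik hne ((pow_dvd_pow 2 (by omega : a ≤ b)).trans pow_padicValNat_dvd)
    set m := ordCompl[2] (n + i) with hm
    have hsplit : 2 ^ b * m = n + i := by
      have h0 := Nat.ordProj_mul_ordCompl_eq_self (n + i) 2
      rw [hm, hb, ← Nat.factorization_def _ hp]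
      exact h0
    have hcop : Nat.Coprime (2 ^ (b + 1)) m :=
      Nat.Coprime.pow_left _ (Nat.coprime_ordCompl hp hni0)
    have hd1 : 2 ^ (b + 1) ∣ l :=
      (pow_dvd_pow 2 (by omega : b + 1 ≤ a)).trans (hdvd.trans (hdl i₀ hi₀))
    have hd2 : m ∣ l := (Nat.ordCompl_dvd (n + i) 2).trans (hdl i hik)
    have hmul : 2 ^ (b + 1) * m ∣ l := hcop.mul_dvd_of_dvd_of_dvd hd1 hd2
    have h2dvd : 2 ∣ l / (n + i) := by
      rw [Nat.dvd_div_iff_mul_dvd (hdl i hik)]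
      have : (n + i) * 2 = 2 ^ (b + 1) * m := by rw [← hsplit]; ring
      rwa [this]
    obtain ⟨c, hc⟩ := h2dvd
    exact ⟨c, by omega⟩
end

section
/- Let n ≥ 1 and k ≥ 1 be natural numbers, let l = lcm(n, n+1, …, n+k), and for each i with 0 ≤ i ≤ k let m_i be a natural number with gcd(m_i, n+i) = 1. Then the natural number ∑_{i=0}^{k} m_i · ( l/(n+i) ) is odd. -/
/-!
Among consecutive integers `n, …, n + k` exactly one, `n + i₀`, has the largest 2-adic valuation:
between two multiples `2^e u < 2^e w` with `u, w` odd lies `2^e (u + 1)`, which is divisible by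
`2^(e+1)`. Hence `l / (n + i₀)` is odd while every other `l / (n + i)` is even, and `m i₀` is odd
because it is coprime to the even number `n + i₀`. So exactly one summand is odd.
-/

open Finset

section LcmDiv

variable {ι : Type*} {s : Finset ι} {f : ι → ℕ} {p : ℕ} {i₀ : ι}

theorem Finset.factorization_lcm_div (hf : ∀ i ∈ s, f i ≠ 0) {i : ι} (hi : i ∈ s) (p : ℕ) :
    (s.lcm f / f i).factorization p =
      (s.sup fun a ↦ (f a).factorization p) - (f i).factorization p := by
  rw [Nat.factorization_div (dvd_lcm hi), Finsupp.tsub_apply, factorization_lcm hf]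

theorem Finset.lcm_div_ne_zero (hf : ∀ i ∈ s, f i ≠ 0) {i : ι} (hi : i ∈ s) :
    s.lcm f / f i ≠ 0 :=
  Nat.div_ne_zero_iff.mpr
    ⟨hf i hi, Nat.le_of_dvd (Nat.pos_of_ne_zero (lcm_ne_zero_iff.mpr hf)) (dvd_lcm hi)⟩

theorem Finset.not_dvd_lcm_div_of_factorization_lt (hp : p.Prime) (hf : ∀ i ∈ s, f i ≠ 0)
    (hi₀ : i₀ ∈ s) (hmax : ∀ j ∈ s, j ≠ i₀ → (f j).factorization p < (f i₀).factorization p) :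
    ¬ p ∣ s.lcm f / f i₀ := by
  have hsup : (s.sup fun a ↦ (f a).factorization p) = (f i₀).factorization p := by
    refine le_antisymm (Finset.sup_le fun j hj ↦ ?_)
      (le_sup (f := fun a ↦ (f a).factorization p) hi₀)
    rcases eq_or_ne j i₀ with rfl | hj₀
    · rfl
    · exact (hmax j hj hj₀).le
  rw [hp.dvd_iff_one_le_factorization (lcm_div_ne_zero hf hi₀), factorization_lcm_div hf hi₀,
    hsup, Nat.sub_self]
  omega

theorem Finset.dvd_lcm_div_of_factorization_lt (hp : p.Prime) (hf : ∀ i ∈ s, f i ≠ 0)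
    (hi₀ : i₀ ∈ s) {j : ι} (hj : j ∈ s) (hlt : (f j).factorization p < (f i₀).factorization p) :
    p ∣ s.lcm f / f j := by
  rw [hp.dvd_iff_one_le_factorization (lcm_div_ne_zero hf hj), factorization_lcm_div hf hj]
  have := le_sup (f := fun a ↦ (f a).factorization p) hi₀
  omega

end LcmDiv

theorem Nat.exists_factorization_two_lt_of_lt {a b : ℕ} (ha : a ≠ 0) (hab : a < b)
    (h : a.factorization 2 = b.factorization 2) :
    ∃ c, a < c ∧ c < b ∧ a.factorization 2 < c.factorization 2 := by
  set e := a.factorization 2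
  have hu := Nat.not_dvd_ordCompl Nat.prime_two ha
  have hw := Nat.not_dvd_ordCompl Nat.prime_two (by omega : b ≠ 0)
  set u := ordCompl[2] a
  set w := ordCompl[2] b
  have hae : 2 ^ e * u = a := Nat.ordProj_mul_ordCompl_eq_self a 2
  have hbe : 2 ^ e * w = b := h ▸ Nat.ordProj_mul_ordCompl_eq_self b 2
  have hpos : 0 < 2 ^ e := by positivity
  have huw : u < w := Nat.lt_of_mul_lt_mul_left (a := 2 ^ e) (by omega)
  refine ⟨2 ^ e * (u + 1), ?_, ?_, ?_⟩
  · rw [← hae]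
    exact Nat.mul_lt_mul_of_pos_left (by omega) hpos
  · -- `u` and `w` are odd, so `u + 1 < w`
    rw [← hbe]
    exact Nat.mul_lt_mul_of_pos_left (by omega) hpos
  · have hdvd : 2 ^ (e + 1) ∣ 2 ^ e * (u + 1) := by
      rw [pow_succ]
      exact Nat.mul_dvd_mul_left _ (by omega)
    have := (Nat.prime_two.pow_dvd_iff_le_factorization (by positivity)).mp hdvd
    omega

theorem Nat.exists_strict_argmax_factorization_two_add (n k : ℕ) (hn : n ≠ 0) :
    ∃ i ∈ range (k + 1), ∀ j ∈ range (k + 1), j ≠ i →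
      (n + j).factorization 2 < (n + i).factorization 2 := by
  obtain ⟨i, hi, hmax⟩ := exists_max_image (range (k + 1)) (fun j ↦ (n + j).factorization 2)
    nonempty_range_add_one
  refine ⟨i, hi, fun j hj hji ↦ (hmax j hj).lt_of_ne fun heq ↦ ?_⟩
  have hbetween : ∀ x ∈ range (k + 1), ∀ y ∈ range (k + 1), x < y →
      (n + x).factorization 2 = (n + y).factorization 2 →
      ∃ t ∈ range (k + 1), (n + x).factorization 2 < (n + t).factorization 2 := by
    intro x hx y hy hxy hxy'
    obtain ⟨c, hxc, hcy, hc⟩ :=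
      exists_factorization_two_lt_of_lt (by omega) (by omega : n + x < n + y) hxy'
    simp only [mem_range] at hx hy ⊢
    exact ⟨c - n, by omega, by rwa [Nat.add_sub_cancel' (by omega)]⟩
  obtain ⟨t, ht, hlt⟩ :
      ∃ t ∈ range (k + 1), (n + i).factorization 2 < (n + t).factorization 2 := by
    rcases hji.lt_or_gt with h | h
    · exact heq ▸ hbetween j hj i hi h heq
    · exact hbetween i hi j hj h heq.symm
  exact (hmax t ht).not_gt hlt

theorem kurschak_sum_odd
    (n k : ℕ) (hn : 1 ≤ n) (hk : 1 ≤ k)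
    (l : ℕ) (hl : l = (Finset.range (k + 1)).lcm (fun i => n + i))
    (m : ℕ → ℕ) (hcop : ∀ i ≤ k, Nat.gcd (m i) (n + i) = 1) :
    Odd (∑ i ∈ Finset.range (k + 1), m i * (l / (n + i))) := by
  have hpos : ∀ i ∈ range (k + 1), n + i ≠ 0 := fun i _ ↦ by omega
  obtain ⟨i₀, hi₀, hmax⟩ := Nat.exists_strict_argmax_factorization_two_add n k (by omega)
  obtain ⟨j, hj, hji₀⟩ := exists_mem_ne (by simp; omega : 1 < #(range (k + 1))) i₀
  have heven : 2 ∣ n + i₀ :=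
    (Nat.prime_two.dvd_iff_one_le_factorization (hpos i₀ hi₀)).mpr (by
      have := hmax j hj hji₀
      omega)
  have hm : Odd (m i₀) := Nat.Coprime.odd_of_right <|
    Nat.Coprime.coprime_dvd_right heven (hcop i₀ (Nat.lt_succ_iff.mp (mem_range.mp hi₀)))
  have hq : Odd (l / (n + i₀)) := Nat.odd_iff.mpr <| Nat.two_dvd_ne_zero.mp <| hl ▸
    not_dvd_lcm_div_of_factorization_lt Nat.prime_two hpos hi₀ hmax
  have hrest : ∀ i ∈ (range (k + 1)).erase i₀, Even (m i * (l / (n + i))) := by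
    intro i hi
    obtain ⟨hii₀, hi⟩ := mem_erase.mp hi
    exact (even_iff_two_dvd.mpr <| hl ▸
      dvd_lcm_div_of_factorization_lt Nat.prime_two hpos hi₀ hi (hmax i hi hii₀)).mul_left _
  rw [← add_sum_erase _ _ hi₀]
  exact (hm.mul hq).add_even (even_sum _ hrest)
end

section
/- Let m, n, k be positive integers. Then the rational number ∑_{i=0}^{k} 1/(m + i·n) is not an integer. -/
/-!
Dividing by `gcd m n` we may assume `m` and `n` coprime. It then suffices to find a prime `p` and
a term `m + i₀ n` whose `p`-adic valuation is positive and larger than that of every other term: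
then `1 / (m + i₀ n)` has smaller `p`-adic valuation than the other terms and than any integer.
* `n` odd: take `p = 2`. Two terms of maximal `2`-adic valuation `t` would have indices at least
  `2 ^ t` apart, and adding `2 ^ t n` to the first one raises its valuation.
* `n = 2`: the sum being at least `1` forces `m ≤ k + 1`, so a Bertrand prime
  `k + 1 < p ≤ 2 k + 2` is one of the odd terms, and the only one it divides.
* `n ≥ 4`: a prime power `p ^ e > k` dividing some term gives such a `p`, since terms sharing a
  factor `q` coprime to `n` have indices congruent modulo `q`. If there is none, Legendre's formula
  gives `∏ (m + i n) ∣ k! lcm(1, …, k)`, although `∏ (m + i n) ≥ n ^ k k! ≥ 4 ^ k k!` and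
  `lcm(1, …, k) < 4 ^ k`.
-/

open Finset Nat

namespace Nagell

section Valuation

variable {p : ℕ} [Fact p.Prime] {c : ℤ}

theorem lt_padicValRat_add (hc : c < 0) {x y : ℚ} (hx : c < padicValRat p x)
    (hy : c < padicValRat p y) : c < padicValRat p (x + y) := by
  by_cases hxy : x + y = 0
  · simpa [hxy] using hc
  · exact (lt_min hx hy).trans_le (padicValRat.min_le_padicValRat_add hxy)

theorem lt_padicValRat_sum {ι : Type*} {s : Finset ι} {f : ι → ℚ} (hc : c < 0)
    (hf : ∀ i ∈ s, c < padicValRat p (f i)) : c < padicValRat p (∑ i ∈ s, f i) :=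
  Finset.sum_induction f (fun x => c < padicValRat p x) (fun _ _ => lt_padicValRat_add hc)
    (by simpa using hc) hf

end Valuation

-- Kummer: every exponent `e` with `⌈n/2⌉ < p ^ e ≤ n` produces a carry when adding
-- `⌊n/2⌋` and `⌈n/2⌉` in base `p`.
theorem lcmUpto_dvd_choose_mul (n : ℕ) :
    lcmUpto n ∣ n.choose (n / 2) * lcmUpto (n - n / 2) := by
  have hchoose : n.choose (n / 2) ≠ 0 := (choose_pos (div_le_self n 2)).ne'
  rw [← factorization_le_iff_dvd (lcmUpto_ne_zero n) (by positivity [lcmUpto_pos (n - n / 2)])]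
  intro p
  by_cases hp : p.Prime
  swap
  · simp [factorization_eq_zero_of_not_prime _ hp]
  rw [Nat.factorization_mul hchoose (lcmUpto_ne_zero _), Finsupp.add_apply,
    factorization_lcmUpto _ hp, factorization_lcmUpto _ hp,
    factorization_choose hp (div_le_self n 2) (lt_add_one _)]
  have hcarry : Icc (log p (n - n / 2) + 1) (log p n) ⊆
      {e ∈ Ico 1 (log p n + 1) | p ^ e ≤ n / 2 % p ^ e + (n - n / 2) % p ^ e} := by
    intro e he
    rw [mem_Icc] at he
    have hle : p ^ e ≤ n := pow_le_of_le_log (by rintro rfl; simp at he; omega) he.2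
    have hgt : n - n / 2 < p ^ e := lt_pow_of_log_lt hp.one_lt (by omega)
    rw [mem_filter, mem_Ico, mod_eq_of_lt (by omega : n / 2 < p ^ e), mod_eq_of_lt hgt]
    omega
  have hcard := card_le_card hcarry
  rw [card_Icc] at hcard
  omega

theorem choose_half_le_four_pow (n : ℕ) : n.choose (n / 2) ≤ 4 ^ (n / 2) := by
  obtain ⟨r, rfl | rfl⟩ := even_or_odd' n
  · simpa [Nat.mul_div_cancel_left r two_pos, centralBinom_eq_two_mul_choose] using
      centralBinom_le_four_pow r
  · simpa [show (2 * r + 1) / 2 = r by omega] using choose_middle_le_pow r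

theorem lcmUpto_lt_four_pow {n : ℕ} (hn : n ≠ 0) : lcmUpto n < 4 ^ n := by
  induction n using Nat.strong_induction_on with
  | _ n ih =>
    obtain rfl | hn2 : n = 1 ∨ 2 ≤ n := by omega
    · decide
    calc lcmUpto n ≤ n.choose (n / 2) * lcmUpto (n - n / 2) :=
          le_of_dvd (Nat.mul_pos (choose_pos (div_le_self n 2)) (lcmUpto_pos _))
            (lcmUpto_dvd_choose_mul n)
      _ < 4 ^ (n / 2) * 4 ^ (n - n / 2) :=
          Nat.mul_lt_mul_of_le_of_lt (choose_half_le_four_pow n) (ih _ (by omega) (by omega))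
            (by positivity)
      _ = 4 ^ n := by rw [← pow_add, Nat.add_sub_cancel' (div_le_self n 2)]

def IsDominant {ι : Type*} (p : ℕ) (s : Finset ι) (a : ι → ℕ) (i₀ : ι) : Prop :=
  i₀ ∈ s ∧ 0 < (a i₀).factorization p ∧
    ∀ j ∈ s, j ≠ i₀ → (a j).factorization p < (a i₀).factorization p

theorem sum_one_div_ne_int_of_isDominant {ι : Type*} {s : Finset ι} {a : ι → ℕ} {p : ℕ} {i₀ : ι}
    (hp : p.Prime) (h : IsDominant p s a i₀) (z : ℤ) : ∑ i ∈ s, (1 : ℚ) / a i ≠ z := by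
  classical
  have : Fact p.Prime := ⟨hp⟩
  obtain ⟨hi₀, hpos, hlt⟩ := h
  have hval : ∀ i, padicValRat p ((1 : ℚ) / a i) = -((a i).factorization p : ℤ) := fun i => by
    rw [one_div, padicValRat.inv, padicValRat.of_nat, Nat.factorization_def _ hp]
  set v : ℤ := ((a i₀).factorization p : ℤ)
  have hv : -v < 0 := by simp [v, hpos]
  intro hz
  have hsplit : (1 : ℚ) / a i₀ = z + -∑ i ∈ s.erase i₀, (1 : ℚ) / a i := by
    rw [← hz, ← add_sum_erase s _ hi₀]; ring
  have hrest : -v < padicValRat p (∑ i ∈ s.erase i₀, (1 : ℚ) / a i) :=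
    lt_padicValRat_sum hv fun j hj => by
      rw [hval, neg_lt_neg_iff, Nat.cast_lt]
      exact hlt j (mem_of_mem_erase hj) (ne_of_mem_erase hj)
  have hint : -v < padicValRat p z := hv.trans_le (by simp [padicValRat.of_int])
  have hlow : -v < padicValRat p ((1 : ℚ) / a i₀) := by
    rw [hsplit]
    exact lt_padicValRat_add hv hint (by rwa [padicValRat.neg])
  exact hlow.ne' (hval i₀)

section ArithmeticProgression

variable {m n q i j k : ℕ}

theorem coprime_of_dvd_add_mul (hmn : m.Coprime n) (h : q ∣ m + i * n) : q.Coprime n :=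
  Nat.Coprime.coprime_dvd_left h ((coprime_add_mul_right_left m n i).mpr hmn)

theorem modEq_of_dvd_add_mul (hqn : q.Coprime n) (hi : q ∣ m + i * n) (hj : q ∣ m + j * n) :
    i ≡ j [MOD q] := by
  wlog hij : i ≤ j generalizing i j
  · exact (this hj hi (le_of_not_ge hij)).symm
  refine (modEq_iff_dvd' hij).mpr (hqn.dvd_of_dvd_mul_right ?_)
  have hsub : (j - i) * n = m + j * n - (m + i * n) := by
    rw [Nat.sub_mul, Nat.add_sub_add_left]
  exact hsub ▸ Nat.dvd_sub hj hi

theorem add_le_of_modEq_of_lt (h : i ≡ j [MOD q]) (hij : i < j) : i + q ≤ j := by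
  by_contra! hlt
  exact absurd (h.symm.le_of_lt_add (by omega)) (by omega)

theorem exists_isDominant_of_lt_pow (hmn : m.Coprime n) (hm : 0 < m) {p e : ℕ} (hp : p.Prime)
    (he : 0 < e) (hi : i ≤ k) (hdvd : p ^ e ∣ m + i * n) (hk : k < p ^ e) :
    ∃ i₀, IsDominant p (range (k + 1)) (fun i => m + i * n) i₀ := by
  obtain ⟨i₀, hi₀, hmax⟩ := exists_max_image (range (k + 1))
    (fun i => (m + i * n).factorization p) nonempty_range_add_one
  set t := (m + i₀ * n).factorization p
  have het : e ≤ t := ((hp.pow_dvd_iff_le_factorization (by positivity)).mp hdvd).trans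
    (hmax i (mem_range_succ_iff.mpr hi))
  refine ⟨i₀, hi₀, he.trans_le het, fun j hj hne => (hmax j hj).lt_of_ne fun heq => ?_⟩
  have hdvd₀ : p ^ t ∣ m + i₀ * n := ordProj_dvd _ p
  have hdvdj : p ^ t ∣ m + j * n := heq ▸ ordProj_dvd _ p
  have hmod := modEq_of_dvd_add_mul (coprime_of_dvd_add_mul hmn hdvd₀) hdvd₀ hdvdj
  have hpt : p ^ e ≤ p ^ t := Nat.pow_le_pow_right hp.pos het
  rw [mem_range_succ_iff] at hi₀ hj
  rcases Nat.lt_or_gt_of_ne hne.symm with h | h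
  · have := add_le_of_modEq_of_lt hmod h; omega
  · have := add_le_of_modEq_of_lt hmod.symm h; omega

theorem two_pow_succ_dvd_add_two_pow_mul {a : ℕ} (ha : a ≠ 0) (hn : Odd n) :
    2 ^ (a.factorization 2 + 1) ∣ a + 2 ^ a.factorization 2 * n := by
  have hodd : Odd (a / 2 ^ a.factorization 2) :=
    Nat.coprime_two_left.mp (coprime_ordCompl prime_two ha)
  calc 2 ^ (a.factorization 2 + 1) ∣ 2 ^ a.factorization 2 * (a / 2 ^ a.factorization 2 + n) :=
        pow_succ 2 _ ▸ mul_dvd_mul_left _ (even_iff_two_dvd.mp (hodd.add_odd hn))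
    _ = a + 2 ^ a.factorization 2 * n := by rw [mul_add, ordProj_mul_ordCompl_eq_self]

theorem exists_isDominant_two_of_odd (hm : 0 < m) (hn : Odd n) (hk : 0 < k) :
    ∃ i₀, IsDominant 2 (range (k + 1)) (fun i => m + i * n) i₀ := by
  obtain ⟨i₀, hi₀, hmax⟩ := exists_max_image (range (k + 1))
    (fun i => (m + i * n).factorization 2) nonempty_range_add_one
  set t := (m + i₀ * n).factorization 2
  have hcop : (2 ^ t).Coprime n := Nat.Coprime.pow_left t (Nat.coprime_two_left.mpr hn)
  have ht : 0 < t := by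
    obtain ⟨i, hi, heven⟩ : ∃ i ∈ range (k + 1), 2 ∣ m + i * n := by
      rcases m.even_or_odd with hm' | hm'
      · exact ⟨0, by simp, by simpa using even_iff_two_dvd.mp hm'⟩
      · exact ⟨1, by simp; omega, by simpa using even_iff_two_dvd.mp (hm'.add_odd hn)⟩
    exact lt_of_lt_of_le ((prime_two.dvd_iff_one_le_factorization (by positivity)).mp heven)
      (hmax i hi)
  have hunique : ∀ i ∈ range (k + 1), ∀ j ∈ range (k + 1), i < j →
      (m + i * n).factorization 2 = t → (m + j * n).factorization 2 = t → False := by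
    intro i hi j hj hij hti htj
    have hdvdi : 2 ^ t ∣ m + i * n := hti ▸ ordProj_dvd _ 2
    have hdvdj : 2 ^ t ∣ m + j * n := htj ▸ ordProj_dvd _ 2
    have hle := add_le_of_modEq_of_lt (modEq_of_dvd_add_mul hcop hdvdi hdvdj) hij
    have hshift : m + (i + 2 ^ t) * n = (m + i * n) + 2 ^ (m + i * n).factorization 2 * n := by
      rw [hti]; ring
    have hbig := two_pow_succ_dvd_add_two_pow_mul (a := m + i * n) (by positivity) hn
    rw [← hshift, hti, prime_two.pow_dvd_iff_le_factorization (by positivity)] at hbig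
    have hle_t := hmax (i + 2 ^ t) (by rw [mem_range] at hj ⊢; omega)
    omega
  refine ⟨i₀, hi₀, ht, fun j hj hne => (hmax j hj).lt_of_ne fun heq => ?_⟩
  rcases Nat.lt_or_gt_of_ne hne with h | h
  · exact hunique j hj i₀ hi₀ h heq rfl
  · exact hunique i₀ hi₀ j hj h rfl heq

theorem exists_isDominant_add_mul_two (hm : Odd m) (hk : 0 < k) (hmk : m ≤ k + 1) :
    ∃ p, p.Prime ∧ ∃ i₀, IsDominant p (range (k + 1)) (fun i => m + i * 2) i₀ := by
  obtain ⟨p, hp, hkp, hp2k⟩ := exists_prime_lt_and_le_two_mul (k + 1) (succ_ne_zero k)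
  have hp_odd : Odd p := hp.eq_two_or_odd'.resolve_left (by omega)
  obtain ⟨r, hr⟩ := hm
  obtain ⟨s, hs⟩ := hp_odd
  have hterm : p ^ 1 ∣ m + (s - r) * 2 := by rw [pow_one]; exact ⟨1, by omega⟩
  exact ⟨p, hp, exists_isDominant_of_lt_pow (Nat.coprime_two_right.mpr ⟨r, hr⟩) (by omega) hp
    one_pos (by omega) hterm (by rw [pow_one]; omega)⟩

theorem card_filter_dvd_add_mul_le (hmn : m.Coprime n) (k : ℕ) :
    #{i ∈ range (k + 1) | q ∣ m + i * n} ≤ k / q + 1 := by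
  calc #{i ∈ range (k + 1) | q ∣ m + i * n} ≤ #(range (k / q + 1)) := by
        refine card_le_card_of_injOn (· / q) (fun i hi => ?_) fun i hi j hj hij => ?_
        · simp only [coe_filter, mem_range, Set.mem_ofPred_eq, coe_range, Set.mem_Iio] at hi ⊢
          exact Nat.lt_succ_of_le (Nat.div_le_div_right (by omega))
        · simp only [coe_filter, mem_range, Set.mem_ofPred_eq] at hi hj
          have hmod := modEq_of_dvd_add_mul (coprime_of_dvd_add_mul hmn hi.2) hi.2 hj.2
          rw [← Nat.div_add_mod i q, ← Nat.div_add_mod j q, hmod]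
          simp_all
    _ = k / q + 1 := card_range _

-- Legendre: the `p`-adic valuation of `k!` is `∑_{e ≥ 1} ⌊k / p^e⌋`, while at most
-- `⌊k / p^e⌋ + 1` terms are divisible by `p ^ e`, and only `p ^ e ≤ k` occur.
theorem factorization_prod_add_mul_le (hmn : m.Coprime n) (hm : 0 < m) {p : ℕ} (hp : p.Prime)
    (hsmall : ∀ i ≤ k, ∀ e, 0 < e → p ^ e ∣ m + i * n → p ^ e ≤ k) :
    (∏ i ∈ range (k + 1), (m + i * n)).factorization p ≤ (k !).factorization p + log p k := by
  have hcount : ∀ i ∈ range (k + 1),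
      (m + i * n).factorization p = #{e ∈ Ico 1 (log p k + 1) | p ^ e ∣ m + i * n} := by
    intro i hi
    rw [factorization_eq_card_pow_dvd _ hp]
    congr 1
    ext e
    simp only [mem_filter, mem_Ico, and_congr_left_iff, and_congr_right_iff]
    intro hdvd he
    exact ⟨fun _ => lt_succ_of_le (le_log_of_pow_le hp.one_lt
        (hsmall i (mem_range_succ_iff.mp hi) e he hdvd)),
      fun _ => lt_of_pow_dvd_right (by positivity) hp.two_le hdvd⟩
  calc (∏ i ∈ range (k + 1), (m + i * n)).factorization p
      = ∑ i ∈ range (k + 1), (m + i * n).factorization p := by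
        rw [factorization_prod fun i _ => by positivity, Finsupp.finsetSum_apply]
    _ = ∑ e ∈ Ico 1 (log p k + 1), #{i ∈ range (k + 1) | p ^ e ∣ m + i * n} := by
        simp only [sum_congr rfl hcount, card_filter]
        exact sum_comm
    _ ≤ ∑ e ∈ Ico 1 (log p k + 1), (k / p ^ e + 1) :=
        sum_le_sum fun e _ => card_filter_dvd_add_mul_le hmn k
    _ = (k !).factorization p + log p k := by
        rw [sum_add_distrib, factorization_factorial hp (lt_succ_self _)]
        simp

theorem prod_add_mul_dvd_factorial_mul_lcmUpto (hmn : m.Coprime n) (hm : 0 < m)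
    (hsmall : ∀ p, p.Prime → ∀ i ≤ k, ∀ e, 0 < e → p ^ e ∣ m + i * n → p ^ e ≤ k) :
    ∏ i ∈ range (k + 1), (m + i * n) ∣ k ! * lcmUpto k := by
  rw [← factorization_le_iff_dvd (by positivity) (by positivity [lcmUpto_pos k])]
  intro p
  by_cases hp : p.Prime
  · rw [Nat.factorization_mul (by positivity) (lcmUpto_ne_zero k), Finsupp.add_apply,
      factorization_lcmUpto k hp]
    exact factorization_prod_add_mul_le hmn hm hp (hsmall p hp)
  · simp [factorization_eq_zero_of_not_prime _ hp]

theorem pow_mul_factorial_le_prod_add_mul (hm : 0 < m) :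
    n ^ k * k ! ≤ ∏ i ∈ range (k + 1), (m + i * n) := by
  calc n ^ k * k ! = ∏ i ∈ range k, ((i + 1) * n) := by
        rw [prod_mul_distrib, prod_const, card_range, prod_range_add_one_eq_factorial, mul_comm]
    _ ≤ ∏ i ∈ range k, (m + (i + 1) * n) := prod_le_prod' fun i _ => le_add_self
    _ ≤ ∏ i ∈ range (k + 1), (m + i * n) := by
        rw [prod_range_succ']
        exact Nat.le_mul_of_pos_right _ (by simpa using hm)

theorem le_succ_of_sum_one_div_eq_int (hm : 0 < m) {z : ℤ}
    (hz : ∑ i ∈ range (k + 1), (1 : ℚ) / (m + i * n) = z) : m ≤ k + 1 := by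
  have hm' : (0 : ℚ) < m := by exact_mod_cast hm
  have hz_pos : (0 : ℚ) < z :=
    hz ▸ sum_pos (fun i _ => by positivity) nonempty_range_add_one
  have hz_one : (1 : ℚ) ≤ z := by exact_mod_cast (Int.cast_pos.mp hz_pos : 0 < z)
  have hsum_le : ∑ i ∈ range (k + 1), (1 : ℚ) / (m + i * n) ≤ (k + 1) / m := by
    calc ∑ i ∈ range (k + 1), (1 : ℚ) / (m + i * n) ≤ ∑ _i ∈ range (k + 1), (1 : ℚ) / m :=
          sum_le_sum fun i _ =>
            one_div_le_one_div_of_le hm' (le_add_of_nonneg_right (by positivity))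
      _ = (k + 1) / m := by simp [div_eq_mul_inv]
  have hmk : (m : ℚ) ≤ k + 1 := by
    rw [← one_le_div hm']
    linarith
  exact_mod_cast hmk

theorem exists_isDominant_of_four_le (hmn : m.Coprime n) (hm : 0 < m) (hn : 4 ≤ n) (hk : 0 < k) :
    ∃ p, p.Prime ∧ ∃ i₀, IsDominant p (range (k + 1)) (fun i => m + i * n) i₀ := by
  by_contra! hnone
  have hsmall : ∀ p, p.Prime → ∀ i ≤ k, ∀ e, 0 < e → p ^ e ∣ m + i * n → p ^ e ≤ k := by
    intro p hp i hi e he hdvd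
    by_contra! hlt
    obtain ⟨i₀, hi₀⟩ := exists_isDominant_of_lt_pow hmn hm hp he hi hdvd hlt
    exact hnone p hp i₀ hi₀
  have hle : n ^ k * k ! ≤ lcmUpto k * k ! :=
    calc n ^ k * k ! ≤ ∏ i ∈ range (k + 1), (m + i * n) := pow_mul_factorial_le_prod_add_mul hm
      _ ≤ lcmUpto k * k ! := mul_comm (k !) _ ▸
          le_of_dvd (by positivity [lcmUpto_pos k])
            (prod_add_mul_dvd_factorial_mul_lcmUpto hmn hm hsmall)
  have hlt : n ^ k < 4 ^ k :=
    (Nat.le_of_mul_le_mul_right hle (factorial_pos k)).trans_lt (lcmUpto_lt_four_pow hk.ne')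
  exact hlt.not_ge (Nat.pow_le_pow_left hn k)

theorem sum_one_div_add_mul_ne_int (hm : 0 < m) (hn : 0 < n) (hk : 0 < k) (hmn : m.Coprime n)
    (z : ℤ) : ∑ i ∈ range (k + 1), (1 : ℚ) / (m + i * n) ≠ z := by
  intro hz
  obtain ⟨p, hp, i₀, hdom⟩ :
      ∃ p, p.Prime ∧ ∃ i₀, IsDominant p (range (k + 1)) (fun i => m + i * n) i₀ := by
    rcases n.even_or_odd with ⟨r, rfl⟩ | hn_odd
    · obtain rfl | hn4 : r = 1 ∨ 4 ≤ r + r := by omega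
      · exact exists_isDominant_add_mul_two (Nat.coprime_two_right.mp hmn) hk
          (le_succ_of_sum_one_div_eq_int hm hz)
      · exact exists_isDominant_of_four_le hmn hm hn4 hk
    · exact ⟨2, prime_two, exists_isDominant_two_of_odd hm hn_odd hk⟩
  exact sum_one_div_ne_int_of_isDominant hp hdom z (by push_cast; exact hz)

end ArithmeticProgression

end Nagell

theorem nagell_sum_not_integer
    (m n k : ℕ) (hm : 0 < m) (hn : 0 < n) (hk : 0 < k) :
    ¬ ∃ z : ℤ, ∑ i ∈ Finset.range (k + 1), (1 : ℚ) / (m + i * n) = (z : ℚ) := by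
  rintro ⟨z, hz⟩
  obtain ⟨g, m', n', hg, hmn, rfl, rfl⟩ := Nat.exists_coprime' (Nat.gcd_pos_of_pos_left n hm)
  refine Nagell.sum_one_div_add_mul_ne_int (Nat.pos_of_mul_pos_right hm)
    (Nat.pos_of_mul_pos_right hn) hk hmn (g * z) ?_
  rw [Int.cast_mul, Int.cast_natCast, ← hz, mul_sum]
  refine sum_congr rfl fun i _ => ?_
  have hterm : (0 : ℚ) < m' + i * n' := by positivity [Nat.pos_of_mul_pos_right hm]
  push_cast
  field_simp
end

section
/- Let R be a linearly ordered commutative ring in which there is no element x with 0 < x < 1, let k ≥ 1 be a natural number, and let m, n be elements of R with n > 0 and m > k (where k denotes the image of k in R). Then for every element p ≥ 0 of R, ∑_{i=0}^{k} ∏_{0 ≤ j ≤ k, j ≠ i} (m + j·n) ≠ p · ∏_{j=0}^{k} (m + j·n). -/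
/-!
Write `f j = m + j * n`. The factor `f 0 = m` is the smallest, so every product omitting one
factor is at most the one omitting `f 0`, strictly so for the one omitting `f k > m`. Discreteness
gives `m ≥ k + 1`, hence the sum is below `(k + 1) ∏_{j ≠ 0} f j ≤ m ∏_{j ≠ 0} f j = ∏ f j`.
A positive element strictly below a positive `P` is not `p * P`: discreteness would force `p ≥ 1`.
-/

namespace Finset

variable {ι R : Type*} [DecidableEq ι] [CommSemiring R] [LinearOrder R] [IsStrictOrderedRing R]
  {s : Finset ι} {f : ι → R} {i j : ι}

-- Both products contain `∏_{s \ {i, j}} f`; they differ only in the factor `f i` versus `f j`.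
lemma prod_erase_le_prod_erase (hf : ∀ x ∈ s, 0 ≤ f x) (hi : i ∈ s) (hj : j ∈ s)
    (hij : f i ≤ f j) : ∏ x ∈ s.erase j, f x ≤ ∏ x ∈ s.erase i, f x := by
  obtain rfl | hne := eq_or_ne i j
  · rfl
  rw [← mul_prod_erase _ f (mem_erase.2 ⟨hne, hi⟩),
    ← mul_prod_erase _ f (mem_erase.2 ⟨hne.symm, hj⟩), erase_right_comm]
  exact mul_le_mul_of_nonneg_right hij
    (prod_nonneg fun x hx => hf x (mem_of_mem_erase (mem_of_mem_erase hx)))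

lemma prod_erase_lt_prod_erase (hf : ∀ x ∈ s, 0 < f x) (hi : i ∈ s) (hj : j ∈ s)
    (hij : f i < f j) : ∏ x ∈ s.erase j, f x < ∏ x ∈ s.erase i, f x := by
  have hne : i ≠ j := fun h => hij.ne (congrArg f h)
  rw [← mul_prod_erase _ f (mem_erase.2 ⟨hne, hi⟩),
    ← mul_prod_erase _ f (mem_erase.2 ⟨hne.symm, hj⟩), erase_right_comm]
  exact mul_lt_mul_of_pos_right hij
    (prod_pos fun x hx => hf x (mem_of_mem_erase (mem_of_mem_erase hx)))

/-- In terms of fractions: `∑_{i ∈ s} 1 / f i < 1` when the smallest `f i` is at least `#s` and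
the `f i` are not all equal. -/
lemma sum_prod_erase_lt_prod (hf : ∀ x ∈ s, 0 < f x) (hi : i ∈ s) (hmin : ∀ x ∈ s, f i ≤ f x)
    (hcard : (#s : R) ≤ f i) (hj : j ∈ s) (hlt : f i < f j) :
    ∑ x ∈ s, ∏ y ∈ s.erase x, f y < ∏ x ∈ s, f x :=
  calc ∑ x ∈ s, ∏ y ∈ s.erase x, f y
      < ∑ _x ∈ s, ∏ y ∈ s.erase i, f y :=
        sum_lt_sum
          (fun x hx => prod_erase_le_prod_erase (fun y hy => (hf y hy).le) hi hx (hmin x hx))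
          ⟨j, hj, prod_erase_lt_prod_erase hf hi hj hlt⟩
    _ = #s * ∏ y ∈ s.erase i, f y := by rw [sum_const, nsmul_eq_mul]
    _ ≤ f i * ∏ y ∈ s.erase i, f y :=
        mul_le_mul_of_nonneg_right hcard
          (prod_nonneg fun y hy => (hf y (mem_of_mem_erase hy)).le)
    _ = ∏ x ∈ s, f x := mul_prod_erase s f hi

end Finset

section NoElementBetweenZeroAndOne

variable {R : Type*} [CommRing R] [LinearOrder R] [IsStrictOrderedRing R]

lemma add_one_le_of_lt_of_discrete (hdisc : ¬ ∃ x : R, 0 < x ∧ x < 1) {a b : R} (hab : a < b) :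
    a + 1 ≤ b := by
  by_contra! h
  exact hdisc ⟨b - a, sub_pos.2 hab, by linarith⟩

lemma ne_mul_of_pos_of_lt_of_discrete (hdisc : ¬ ∃ x : R, 0 < x ∧ x < 1) {a b : R} (ha : 0 < a)
    (hab : a < b) (p : R) : a ≠ p * b := by
  rintro rfl
  have hp : 0 < p := pos_of_mul_pos_left ha (ha.trans hab).le
  have hp1 : 1 ≤ p := by simpa using add_one_le_of_lt_of_discrete hdisc hp
  exact hab.not_ge (le_mul_of_one_le_left (ha.trans hab).le hp1)

end NoElementBetweenZeroAndOne

theorem nagell_first_step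
    {R : Type*} [CommRing R] [LinearOrder R] [IsStrictOrderedRing R]
    (hdisc : ¬ ∃ x : R, 0 < x ∧ x < 1)
    (k : ℕ) (hk : 1 ≤ k)
    (m n : R) (hn : 0 < n) (hm : (k : R) < m) :
    ∀ p : R, 0 ≤ p →
      ∑ i ∈ Finset.range (k + 1),
          ∏ j ∈ (Finset.range (k + 1)).erase i, (m + (j : R) * n)
        ≠ p * ∏ j ∈ Finset.range (k + 1), (m + (j : R) * n) := by
  intro p _
  have hmono : ∀ j : ℕ, m ≤ m + (j : R) * n := fun j =>
    le_add_of_nonneg_right (mul_nonneg j.cast_nonneg hn.le)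
  have hpos : ∀ j ∈ Finset.range (k + 1), 0 < m + (j : R) * n := fun j _ =>
    (k.cast_nonneg.trans_lt hm).trans_le (hmono j)
  have hlast : m < m + (k : R) * n := lt_add_of_pos_right m (mul_pos (by exact_mod_cast hk) hn)
  have hcard : ((Finset.range (k + 1)).card : R) ≤ m + ((0 : ℕ) : R) * n := by
    simpa using add_one_le_of_lt_of_discrete hdisc hm
  have hsum_pos : 0 < ∑ i ∈ Finset.range (k + 1),
      ∏ j ∈ (Finset.range (k + 1)).erase i, (m + (j : R) * n) :=
    Finset.sum_pos (fun i _ => Finset.prod_pos fun j hj => hpos j (Finset.mem_of_mem_erase hj))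
      Finset.nonempty_range_add_one
  refine ne_mul_of_pos_of_lt_of_discrete hdisc hsum_pos ?_ p
  exact Finset.sum_prod_erase_lt_prod hpos (by simp) (fun j _ => by simpa using hmono j) hcard
    (Finset.self_mem_range_succ k) (by simpa using hlast)
end

section
/- Let R be a linearly ordered commutative ring, let k ≥ 1 be a natural number, and let m, n, p be elements of R with m > 0, n > 0, p > 0 satisfying ∑_{i=0}^{k} ∏_{0 ≤ j ≤ k, j ≠ i} (m + j·n) = p · ∏_{j=0}^{k} (m + j·n), where j denotes the image of the natural number j in R. Then p · m · (m + n) ≤ m + n + k · m. -/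
/-!
Write `f j = m + j n` and `P = ∏ f j`, so that the hypothesis says `∑ P / f i = p P`, i.e.
`∑ 1 / f i = p`. The term `i = 0` is `1 / m` and each of the other `k` terms is at most
`1 / (m + n)`; clearing denominators gives `p m (m + n) ≤ m + n + k m`. Over a ring the
reciprocals are never formed: every bound `1 / f i ≤ b i / c` is used as `c ≤ b i * f i`.
-/

namespace Finset

variable {ι R : Type*} [DecidableEq ι] [CommSemiring R] [PartialOrder R] [IsOrderedRing R]
  {s : Finset ι} {f : ι → R}

theorem mul_prod_erase_le_mul_prod (hf : ∀ j ∈ s, 0 ≤ f j) {i : ι} (hi : i ∈ s) {a b : R}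
    (h : a ≤ b * f i) : a * ∏ j ∈ s.erase i, f j ≤ b * ∏ j ∈ s, f j := by
  rw [← mul_prod_erase s f hi, ← mul_assoc]
  exact mul_le_mul_of_nonneg_right h (prod_nonneg fun j hj => hf j (mem_of_mem_erase hj))

theorem mul_sum_prod_erase_le (hf : ∀ j ∈ s, 0 ≤ f j) {c : R} {b : ι → R}
    (h : ∀ i ∈ s, c ≤ b i * f i) :
    c * ∑ i ∈ s, ∏ j ∈ s.erase i, f j ≤ (∑ i ∈ s, b i) * ∏ j ∈ s, f j := by
  rw [mul_sum, sum_mul]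
  exact sum_le_sum fun i hi => mul_prod_erase_le_mul_prod hf hi (h i hi)

end Finset

theorem nagell_second_step_general
    {R : Type*} [CommRing R] [LinearOrder R] [IsStrictOrderedRing R]
    (k : ℕ)
    (m n p : R) (hm : 0 < m) (hn : 0 < n)
    (heq : ∑ i ∈ Finset.range (k + 1),
          ∏ j ∈ (Finset.range (k + 1)).erase i, (m + (j : R) * n)
        = p * ∏ j ∈ Finset.range (k + 1), (m + (j : R) * n)) :
    p * m * (m + n) ≤ m + n + (k : R) * m := by
  have hpos : ∀ j : ℕ, 0 < m + (j : R) * n := fun j => by positivity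
  have hterm : ∀ i ∈ Finset.range (k + 1),
      m * (m + n) ≤ (if i = 0 then m + n else m) * (m + (i : R) * n) := by
    rintro (_ | i) -
    · simp [mul_comm]
    · have : n ≤ ((i + 1 : ℕ) : R) * n := le_mul_of_one_le_left hn.le (by simp)
      simp only [Nat.add_one_ne_zero, if_false]
      gcongr
  have hbound := Finset.mul_sum_prod_erase_le (fun j _ => (hpos j).le) hterm
  have hsum :
      ∑ i ∈ Finset.range (k + 1), (if i = 0 then m + n else m) = m + n + (k : R) * m := by
    simp [Finset.sum_range_succ', add_comm]
  rw [heq, hsum] at hbound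
  refine le_of_mul_le_mul_right ?_
    (Finset.prod_pos fun j (_ : j ∈ Finset.range (k + 1)) => hpos j)
  linarith

theorem nagell_second_step
    {R : Type*} [CommRing R] [LinearOrder R] [IsStrictOrderedRing R]
    (k : ℕ) (hk : 1 ≤ k)
    (m n p : R) (hm : 0 < m) (hn : 0 < n) (hp : 0 < p)
    (heq : ∑ i ∈ Finset.range (k + 1),
          ∏ j ∈ (Finset.range (k + 1)).erase i, (m + (j : R) * n)
        = p * ∏ j ∈ Finset.range (k + 1), (m + (j : R) * n)) :
    p * m * (m + n) ≤ m + n + (k : R) * m :=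
  nagell_second_step_general k m n p hm hn heq
end

section
/- Let n ≥ 1 and k ≥ 1 be natural numbers and let m_0, …, m_k, p be natural numbers with gcd(m_0, n) = 1. If ∑_{i=0}^{k} ( m_i · ∏_{0 ≤ j ≤ k, j ≠ i} (n+j) ) = p · ∏_{j=0}^{k} (n+j), then n divides k!. -/
theorem phi_k_implies_n_dvd_factorial
    (n k : ℕ) (hn : 1 ≤ n) (hk : 1 ≤ k) (m : ℕ → ℕ) (p : ℕ)
    (hcop : Nat.gcd (m 0) n = 1)
    (heq : ∑ i ∈ Finset.range (k + 1),
          m i * ∏ j ∈ (Finset.range (k + 1)).erase i, (n + j)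
        = p * ∏ j ∈ Finset.range (k + 1), (n + j)) :
    n ∣ Nat.factorial k := by
  have key : n ∣ m 0 * Nat.factorial k := by
    have hcast := congrArg (Nat.cast : ℕ → ZMod n) heq
    push_cast at hcast
    have hn0 : (n : ZMod n) = 0 := ZMod.natCast_self n
    rw [hn0] at hcast
    have h0mem : (0 : ℕ) ∈ Finset.range (k + 1) := by simp
    rw [Finset.prod_eq_prod_diff_singleton_mul h0mem (fun j => ((0 : ZMod n) + (j : ZMod n)))] at hcast
    simp only [add_zero, Nat.cast_zero, zero_add, mul_zero] at hcast
    rw [Finset.sum_eq_sum_sdiff_singleton_add h0mem] at hcast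
    have hrest : ∑ i ∈ Finset.range (k + 1) \ {0},
        (m i : ZMod n) * ∏ j ∈ (Finset.range (k + 1)).erase i, (j : ZMod n) = 0 := by
      apply Finset.sum_eq_zero
      intro i hi
      simp only [Finset.mem_sdiff, Finset.mem_singleton, Finset.mem_range] at hi
      have h0i : (0 : ℕ) ∈ (Finset.range (k + 1)).erase i := by
        simp [Finset.mem_erase, Ne.symm hi.2]
      rw [Finset.prod_eq_prod_diff_singleton_mul h0i (fun j => (j : ZMod n))]
      simp
    rw [hrest, zero_add] at hcast
    have hprod : (∏ j ∈ (Finset.range (k + 1)).erase 0, (j : ZMod n))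
        = (Nat.factorial k : ZMod n) := by
      have : (Finset.range (k + 1)).erase 0 = Finset.Ico 1 (k + 1) := by
        ext x; simp [Finset.mem_erase, Finset.mem_Ico, Nat.one_le_iff_ne_zero]
      rw [this]
      push_cast
      rw [← Nat.cast_prod, Finset.prod_Ico_id_eq_factorial]
    rw [hprod] at hcast
    have := (ZMod.natCast_eq_zero_iff (m 0 * Nat.factorial k) n).mp (by push_cast; exact hcast)
    exact this
  exact (Nat.Coprime.dvd_of_dvd_mul_left (Nat.coprime_comm.mp hcop) key)
end
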